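/- arXiv:0706.2908 — 7 statements merged into one kernel-verified Lean document; each statement's English description precedes it below -/
import Mathlib

section
/- The number of partitions of n in which no part has multiplicity p or more equals the number of partitions of n into parts not divisible by p. -/
/-- The number of partitions of `n` in which no part has multiplicity `p` or more
equals the number of partitions of `n` into parts not divisible by `p`. -/
theorem partitions_mult_lt_card_eq_not_dvd_card (n p : ℕ) (hp : 2 ≤ p) :
    Nat.card {μ : n.Partition // ∀ i ∈ μ.parts, μ.parts.count i < p} =
      Nat.card {μ : n.Partition // ∀ i ∈ μ.parts, ¬ p ∣ i} := by
  rw [Nat.card_eq_fintype_card, Nat.card_eq_fintype_card, Fintype.card_subtype,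
    Fintype.card_subtype]
  exact (Nat.Partition.card_restricted_eq_card_countRestricted n (by omega : 0 < p)).symm
end

section
/- For subgroups H, K of a finite group G, the index [N_G(H):H] divides the number of fixed points |Fix_{G/H}(K)| of K acting on the coset space G/H. -/
/-
The normalizer `N` of `H` acts on `G ⧸ H` from the right, `gH ↦ gnH`, and this commutes with
the left action of `K`, so it restricts to the `K`-fixed cosets. The stabilizer in `N` of any coset
`gH` is `H`, so every orbit has exactly `[N : H]` elements.
-/

open MulAction Subgroup

theorem MulAction.card_eq_card_orbitRel_quotient_mul_index {M X : Type*} [Group M]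
    [MulAction M X] {L : Subgroup M} (h : ∀ x : X, stabilizer M x = L) :
    Nat.card X = Nat.card (orbitRel.Quotient M X) * L.index := by
  have e : X ≃ Σ _ : orbitRel.Quotient M X, M ⧸ L :=
    (selfEquivSigmaOrbitsQuotientStabilizer M X).trans
      (Equiv.sigmaCongrRight fun ω => quotientEquivOfEq (h ω.out))
  rw [Nat.card_congr (e.trans (Equiv.sigmaEquivProd _ _)), Nat.card_prod, index]

def MulAction.fixedPointsSubMul (M K α : Type*) [SMul M α] [Monoid K] [MulAction K α]
    [SMulCommClass K M α] : SubMulAction M α where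
  carrier := fixedPoints K α
  smul_mem' m a ha k := by rw [smul_comm, ha]

namespace Subgroup

variable {G : Type*} [Group G]

theorem map_inv'_eq_op (H : Subgroup G) : H.map (MulEquiv.inv' G : G →* Gᵐᵒᵖ) = H.op := by
  ext x
  simp only [mem_map, mem_op]
  constructor
  · rintro ⟨g, hg, rfl⟩
    simpa using inv_mem hg
  · intro hx
    exact ⟨x.unop⁻¹, inv_mem hx, by simp⟩

theorem relIndex_op (H K : Subgroup G) : H.op.relIndex K.op = H.relIndex K := by
  rw [← map_inv'_eq_op, ← map_inv'_eq_op,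
    relIndex_map_map_of_injective _ _ (MulEquiv.injective _)]

end Subgroup

namespace QuotientGroup

variable {G : Type*} [Group G] (H : Subgroup G)

instance : SMulCommClass G (normalizer (H : Set G)).op (G ⧸ H) where
  smul_comm g n q := by
    induction q using QuotientGroup.induction_on
    simp only [Quotient.smul_mk, Subgroup.smul_def, MulOpposite.smul_eq_mul_unop, smul_eq_mul,
      mul_assoc]

-- Not found by instance search: `K` acts on `G ⧸ H` through `mulLeftCosetsCompSubtypeVal`.
instance (K : Subgroup G) : SMulCommClass K (normalizer (H : Set G)).op (G ⧸ H) :=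
  smulCommClass_left K

theorem stabilizer_normalizer_op (q : G ⧸ H) :
    stabilizer (normalizer (H : Set G)).op q = H.op.subgroupOf (normalizer (H : Set G)).op := by
  induction q using QuotientGroup.induction_on with | H g => ?_
  ext n
  simp [Quotient.smul_mk, Subgroup.smul_def, MulOpposite.smul_eq_mul_unop, QuotientGroup.eq,
    mem_subgroupOf]

end QuotientGroup

theorem relindex_normalizer_dvd_card_fixedPoints_general
    (G : Type*) [Group G] (H K : Subgroup G) :
    H.relIndex (Subgroup.normalizer (H : Set G)) ∣ Nat.card (MulAction.fixedPoints K (G ⧸ H)) := by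
  have hcard := card_eq_card_orbitRel_quotient_mul_index
    (X := fixedPointsSubMul (normalizer (H : Set G)).op K (G ⧸ H)) fun q => by
      rw [SubMulAction.stabilizer_of_subMul, QuotientGroup.stabilizer_normalizer_op]
  rw [← relIndex, relIndex_op] at hcard
  exact Dvd.intro_left _ hcard.symm

/-- For subgroups `H`, `K` of a finite group `G`, the index `[N_G(H) : H]` divides the
number of fixed points of `K` acting on the coset space `G ⧸ H`. -/
theorem relindex_normalizer_dvd_card_fixedPoints
    (G : Type*) [Group G] [Fintype G] (H K : Subgroup G) :
    H.relIndex (Subgroup.normalizer (H : Set G)) ∣ Nat.card (MulAction.fixedPoints K (G ⧸ H)) :=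
  relindex_normalizer_dvd_card_fixedPoints_general G H K
end

section
/- Two finite G-sets X and Y are isomorphic as G-sets if and only if for every subgroup H ≤ G the number of points of X fixed by H equals the number of points of Y fixed by H. -/
/-!
Fixed-point counts are additive over disjoint unions and invariant under isomorphism. Conversely,
take a subgroup `H` maximal among those fixing a point of `X`. As the counts agree, `H` also fixes
a point of `Y`, and maximality makes `H` the stabilizer of both points, so their orbits are both
isomorphic to `G ⧸ H`. Removing the two orbits keeps the counts equal; induct on `|X|`.
-/

open MulAction

def EquivariantlyEquiv (G X Y : Type*) [SMul G X] [SMul G Y] : Prop :=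
  ∃ e : X ≃ Y, ∀ (g : G) (x : X), e (g • x) = g • e x

namespace EquivariantlyEquiv

variable {G X Y Z X' Y' : Type*}

section SMul

variable [SMul G X] [SMul G Y] [SMul G Z] [SMul G X'] [SMul G Y']

theorem symm : EquivariantlyEquiv G X Y → EquivariantlyEquiv G Y X := by
  rintro ⟨e, he⟩
  exact ⟨e.symm, fun g y => e.symm_apply_eq.mpr (by rw [he, e.apply_symm_apply])⟩

theorem trans :
    EquivariantlyEquiv G X Y → EquivariantlyEquiv G Y Z → EquivariantlyEquiv G X Z := by
  rintro ⟨e, he⟩ ⟨f, hf⟩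
  exact ⟨e.trans f, fun g x => by simp only [Equiv.trans_apply, he, hf]⟩

theorem sumCongr : EquivariantlyEquiv G X Y → EquivariantlyEquiv G X' Y' →
    EquivariantlyEquiv G (X ⊕ X') (Y ⊕ Y') := by
  rintro ⟨e, he⟩ ⟨f, hf⟩
  refine ⟨e.sumCongr f, ?_⟩
  rintro g (x | x') <;> simp [he, hf]

end SMul

theorem card_fixedPoints_eq [Group G] [MulAction G X] [MulAction G Y]
    (h : EquivariantlyEquiv G X Y) (H : Subgroup G) :
    Nat.card (fixedPoints H X) = Nat.card (fixedPoints H Y) := by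
  obtain ⟨e, he⟩ := h
  refine Nat.card_congr (e.subtypeEquiv fun x => ?_)
  simp only [mem_fixedPoints, Subgroup.smul_def, ← he, e.injective.eq_iff]

end EquivariantlyEquiv

section

variable {G X Y : Type*} [Group G] [MulAction G X] [MulAction G Y]

theorem mem_fixedPoints_iff_le_stabilizer {H : Subgroup G} {x : X} :
    x ∈ fixedPoints H X ↔ H ≤ stabilizer G x := by
  simp [mem_fixedPoints, SetLike.le_def, Subgroup.smul_def]

theorem fixedPoints_bot : fixedPoints (⊥ : Subgroup G) X = Set.univ :=
  Set.eq_univ_of_forall fun _ => mem_fixedPoints_iff_le_stabilizer.2 bot_le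

theorem card_fixedPoints_sum {A B : Type*} [MulAction G A] [MulAction G B] [Finite A] [Finite B]
    (H : Subgroup G) : Nat.card (fixedPoints H (A ⊕ B)) =
      Nat.card (fixedPoints H A) + Nat.card (fixedPoints H B) := by
  rw [← Nat.card_sum]
  refine Nat.card_congr (Equiv.subtypeSum.trans (Equiv.sumCongr
    (Equiv.subtypeEquivRight fun a => ?_) (Equiv.subtypeEquivRight fun b => ?_))) <;>
  simp [mem_fixedPoints, Subgroup.smul_def]

theorem SubMulAction.equivariantlyEquiv_sum_compl (S : SubMulAction G X) :
    EquivariantlyEquiv G X (S ⊕ ↥Sᶜ) := by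
  classical
  refine EquivariantlyEquiv.symm ⟨Equiv.sumCompl (· ∈ S), ?_⟩
  rintro g (s | s) <;> rfl

theorem SubMulAction.card_fixedPoints_eq_add [Finite X] (S : SubMulAction G X) (H : Subgroup G) :
    Nat.card (fixedPoints H X) = Nat.card (fixedPoints H S) + Nat.card (fixedPoints H ↥Sᶜ) := by
  rw [S.equivariantlyEquiv_sum_compl.card_fixedPoints_eq, card_fixedPoints_sum]

variable (G) in
def orbitSubMulAction (x : X) : SubMulAction G X where
  carrier := orbit G x
  smul_mem' g z hz := orbit_eq_iff.2 hz ▸ mem_orbit z g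

theorem equivariantlyEquiv_quotient_orbit {H : Subgroup G} {x : X} (hx : stabilizer G x = H) :
    EquivariantlyEquiv G (G ⧸ H) (orbitSubMulAction G x) := by
  subst hx
  refine ⟨(orbitEquivQuotientStabilizer G x).symm, fun g q => ?_⟩
  induction q using QuotientGroup.induction_on with
  | H g' => exact Subtype.ext (mul_smul g g' x)

theorem stabilizer_eq_of_maximal {H : Subgroup G}
    (hH : Maximal (fun K : Subgroup G => (fixedPoints K X).Nonempty) H) {x : X}
    (hx : x ∈ fixedPoints H X) : stabilizer G x = H := by
  have hle : H ≤ stabilizer G x := mem_fixedPoints_iff_le_stabilizer.1 hx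
  exact le_antisymm (hH.2 ⟨x, mem_fixedPoints_iff_le_stabilizer.2 le_rfl⟩ hle) hle

theorem fixedPoints_nonempty_iff_of_card_eq [Finite X] [Finite Y] {H : Subgroup G}
    (h : Nat.card (fixedPoints H X) = Nat.card (fixedPoints H Y)) :
    (fixedPoints H X).Nonempty ↔ (fixedPoints H Y).Nonempty := by
  rw [← Set.ncard_pos (Set.toFinite _), ← Set.ncard_pos (Set.toFinite _),
    ← Nat.card_coe_set_eq, ← Nat.card_coe_set_eq, h]

theorem nonempty_iff_of_card_fixedPoints_eq [Finite X] [Finite Y]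
    (h : ∀ H : Subgroup G, Nat.card (fixedPoints H X) = Nat.card (fixedPoints H Y)) :
    Nonempty X ↔ Nonempty Y := by
  simpa only [fixedPoints_bot, ← Set.nonempty_iff_univ_nonempty]
    using fixedPoints_nonempty_iff_of_card_eq (h ⊥)

theorem exists_stabilizer_eq_of_card_fixedPoints_eq [Finite G] [Finite X] [Finite Y] [Nonempty X]
    (h : ∀ H : Subgroup G, Nat.card (fixedPoints H X) = Nat.card (fixedPoints H Y)) :
    ∃ (x : X) (y : Y), stabilizer G x = stabilizer G y := by
  have hXY : (fun K : Subgroup G => (fixedPoints K X).Nonempty) =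
      fun K => (fixedPoints K Y).Nonempty :=
    funext fun K => propext (fixedPoints_nonempty_iff_of_card_eq (h K))
  obtain ⟨H, hH⟩ := exists_maximal_of_wellFoundedGT
    (fun K : Subgroup G => (fixedPoints K X).Nonempty) ⟨⊥, by simp [fixedPoints_bot]⟩
  have hH' : Maximal (fun K : Subgroup G => (fixedPoints K Y).Nonempty) H := hXY ▸ hH
  obtain ⟨x, hx⟩ := hH.1
  obtain ⟨y, hy⟩ := hH'.1
  exact ⟨x, y, (stabilizer_eq_of_maximal hH hx).trans (stabilizer_eq_of_maximal hH' hy).symm⟩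

theorem card_fixedPoints_compl_eq [Finite X] [Finite Y] {S : SubMulAction G X}
    {T : SubMulAction G Y} (hST : EquivariantlyEquiv G S T)
    (h : ∀ H : Subgroup G, Nat.card (fixedPoints H X) = Nat.card (fixedPoints H Y))
    (H : Subgroup G) : Nat.card (fixedPoints H ↥Sᶜ) = Nat.card (fixedPoints H ↥Tᶜ) := by
  have hH := h H
  rw [S.card_fixedPoints_eq_add, T.card_fixedPoints_eq_add, hST.card_fixedPoints_eq] at hH
  omega

theorem equivariantlyEquiv_of_card_fixedPoints_eq [Finite G] [Finite X] [Finite Y]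
    (h : ∀ H : Subgroup G, Nat.card (fixedPoints H X) = Nat.card (fixedPoints H Y)) :
    EquivariantlyEquiv G X Y := by
  induction hn : Nat.card X using Nat.strong_induction_on generalizing X Y with
  | _ n ih =>
  rcases isEmpty_or_nonempty X with hX | hX
  · have : IsEmpty Y := not_nonempty_iff.1 fun hY =>
      not_nonempty_iff.2 hX ((nonempty_iff_of_card_fixedPoints_eq h).2 hY)
    exact ⟨Equiv.equivOfIsEmpty X Y, fun _ x => isEmptyElim x⟩
  obtain ⟨x, y, hxy⟩ := exists_stabilizer_eq_of_card_fixedPoints_eq h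
  have hST : EquivariantlyEquiv G (orbitSubMulAction G x) (orbitSubMulAction G y) :=
    (equivariantlyEquiv_quotient_orbit rfl).symm.trans (equivariantlyEquiv_quotient_orbit hxy.symm)
  have hlt : Nat.card ↥(orbitSubMulAction G x)ᶜ < n :=
    hn ▸ Finite.card_subtype_lt (x := x) (not_not.2 (mem_orbit_self x))
  exact (orbitSubMulAction G x).equivariantlyEquiv_sum_compl.trans <|
    (hST.sumCongr (ih _ hlt (card_fixedPoints_compl_eq hST h) rfl)).trans
      (orbitSubMulAction G y).equivariantlyEquiv_sum_compl.symm

end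

/-- Two finite `G`-sets `X` and `Y` are isomorphic as `G`-sets if and only if for every
subgroup `H ≤ G` the number of points of `X` fixed by `H` equals the number of points of
`Y` fixed by `H`. -/
theorem gset_iso_iff_card_fixedPoints_eq
    (G : Type*) [Group G] [Finite G]
    (X Y : Type*) [MulAction G X] [MulAction G Y] [Finite X] [Finite Y] :
    (∃ e : X ≃ Y, ∀ (g : G) (x : X), e (g • x) = g • e x) ↔
      ∀ H : Subgroup G,
        Nat.card (MulAction.fixedPoints H X) = Nat.card (MulAction.fixedPoints H Y) :=
  ⟨EquivariantlyEquiv.card_fixedPoints_eq, equivariantlyEquiv_of_card_fixedPoints_eq⟩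
end

section
/- Let K be a subset of the simple transpositions of S_n whose associated composition of n has a_i parts equal to i for each i. Then the index of the standard parabolic subgroup W_K in its normalizer in S_n equals a_1! · a_2! · ⋯ · a_n!. -/
/-!
The normalizer of `W_K` permutes the `W_K`-orbits, which gives a homomorphism from `N(W_K)` to
the permutations of the orbit set. Since `W_K` is generated by transpositions, it contains every
permutation that preserves each orbit, so the kernel is exactly `W_K`. Conversely, a permutation
of the orbits that preserves their sizes lifts to the normalizer by choosing bijections between
corresponding orbits. So `N(W_K) / W_K` is the group of size-preserving permutations of the
orbits, a product of symmetric groups on the `a_i` orbits of size `i`.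
-/

/-- The Young (standard parabolic) subgroup of `S_{m+1}` generated by the adjacent
transpositions `(i, i+1)` for `i ∈ K`. -/
def youngSubgroup (m : ℕ) (K : Finset (Fin m)) : Subgroup (Equiv.Perm (Fin (m + 1))) :=
  Subgroup.closure ((fun i : Fin m => Equiv.swap i.castSucc i.succ) '' K)

/-- The multiset of orbit sizes of a subgroup of `S_{m+1}` acting on `{1, …, m+1}`;
for a Young subgroup this is the partition of `m+1` determined by the corresponding
composition (the number `a_i` of parts equal to `i` is the number of orbits of size `i`). -/
noncomputable def orbitSizes (m : ℕ) (P : Subgroup (Equiv.Perm (Fin (m + 1)))) : Multiset ℕ :=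
  letI := Fintype.ofFinite (MulAction.orbitRel.Quotient P (Fin (m + 1)))
  (Finset.univ : Finset (MulAction.orbitRel.Quotient P (Fin (m + 1)))).val.map
    fun q => Nat.card q.orbit

open Equiv MulAction Finset

theorem Multiset.count_map_univ {β γ : Type*} [Fintype β] [DecidableEq γ] (f : β → γ)
    (c : γ) :
    (univ.val.map f).count c = Nat.card {b // f b = c} := by
  classical
  rw [Multiset.count_map, Nat.card_eq_fintype_card, Fintype.card_subtype]
  simp only [eq_comm]
  rfl

theorem Equiv.Perm.card_forall_comp_eq_prod_range {β : Type*} [Finite β] (f : β → ℕ)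
    {N : ℕ} (hf : ∀ b, f b < N) :
    Nat.card {g : Perm β // ∀ b, f (g b) = f b} =
      ∏ i ∈ range N, (Nat.card {b // f b = i}).factorial := by
  classical
  cases nonempty_fintype β
  rw [Nat.card_congr (subtypeEquivRight fun g => funext_iff.symm), Nat.card_eq_fintype_card]
  refine (DomMulAct.stabilizer_card' f).trans <|
    (prod_subset (fun i hi => ?_) fun i _ hi => ?_).trans (prod_congr rfl fun i _ => ?_)
  · obtain ⟨b, -, rfl⟩ := mem_image.mp hi
    exact mem_range.mpr (hf b)
  · rw [Fintype.card_eq_zero_iff.mpr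
      (isEmpty_subtype _ |>.mpr fun b hb => hi (mem_image.mpr ⟨b, mem_univ _, hb⟩))]
    rfl
  · rw [Nat.card_eq_fintype_card]

theorem Equiv.Perm.exists_comp_eq_of_card_fiber {α β : Type*} [Finite α] (p : α → β)
    (π : Perm β) (h : ∀ b, Nat.card {a // p a = π b} = Nat.card {a // p a = b}) :
    ∃ σ : Perm α, ∀ a, p (σ a) = π (p a) := by
  have e : ∀ c, {a // π (p a) = c} ≃ {a // p a = c} := fun c =>
    (subtypeEquivRight fun a => (π.eq_symm_apply).symm).trans
      (Finite.card_eq.mp (by rw [← h, π.apply_symm_apply])).some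
  exact ⟨ofFiberEquiv e, ofFiberEquiv_map e⟩

theorem MulAction.orbitRel.Quotient.mk_eq_mk_iff {H α : Type*} [Group H] [MulAction H α]
    {x y : α} :
    (Quotient.mk'' x : orbitRel.Quotient H α) = Quotient.mk'' y ↔ x ∈ MulAction.orbit H y := by
  rw [← mem_orbit, orbit_mk]

namespace Subgroup

variable {α : Type*} (G : Subgroup (Perm α))

theorem apply_mem_orbit_apply_of_mem_normalizer {σ : Perm α}
    (hσ : σ ∈ normalizer (G : Set (Perm α))) {x y : α} (hy : y ∈ orbit G x) :
    σ y ∈ orbit G (σ x) := by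
  obtain ⟨g, rfl⟩ := hy
  exact ⟨⟨σ * g * σ⁻¹, (mem_normalizer_iff.mp hσ g).mp g.2⟩,
    by simp [Subgroup.smul_def, Perm.smul_def]⟩

theorem apply_mem_orbit_apply_iff_of_mem_normalizer {σ : Perm α}
    (hσ : σ ∈ normalizer (G : Set (Perm α))) {x y : α} :
    σ y ∈ orbit G (σ x) ↔ y ∈ orbit G x :=
  ⟨fun h => by simpa using apply_mem_orbit_apply_of_mem_normalizer G (inv_mem hσ) h,
    apply_mem_orbit_apply_of_mem_normalizer G hσ⟩

def normalizerOrbitPerm : normalizer (G : Set (Perm α)) →* Perm (orbitRel.Quotient G α) where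
  toFun σ := Quotient.congr σ fun _ _ => by
    rw [orbitRel_apply, orbitRel_apply, apply_mem_orbit_apply_iff_of_mem_normalizer G σ.2]
  map_one' := by ext q; induction q using Quotient.inductionOn'; rfl
  map_mul' _ _ := by ext q; induction q using Quotient.inductionOn'; rfl

theorem normalizerOrbitPerm_mk (σ : normalizer (G : Set (Perm α))) (x : α) :
    normalizerOrbitPerm G σ (Quotient.mk'' x) = Quotient.mk'' ((σ : Perm α) x) :=
  rfl

theorem card_orbit_apply_of_mem_normalizer {σ : Perm α}
    (hσ : σ ∈ normalizer (G : Set (Perm α))) (x : α) :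
    Nat.card (orbit G (σ x)) = Nat.card (orbit G x) := by
  have : σ '' orbit G x = orbit G (σ x) := by
    ext y
    rw [σ.image_eq_preimage_symm, Set.mem_preimage,
      ← apply_mem_orbit_apply_iff_of_mem_normalizer G hσ, σ.apply_symm_apply]
  rw [← this, Nat.card_image_of_injective σ.injective]

variable {G}

theorem ker_normalizerOrbitPerm (hG : ∀ σ : Perm α, (∀ x, σ x ∈ orbit G x) → σ ∈ G) :
    (normalizerOrbitPerm G).ker = G.subgroupOf (normalizer (G : Set (Perm α))) := by
  ext σ
  rw [MonoidHom.mem_ker, mem_subgroupOf, Perm.ext_iff, Quotient.forall]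
  simp only [← Quotient.mk''_eq_mk, normalizerOrbitPerm_mk, Perm.one_apply,
    orbitRel.Quotient.mk_eq_mk_iff]
  exact ⟨hG σ, fun hσ x => ⟨⟨σ, hσ⟩, rfl⟩⟩

theorem mem_normalizer_of_mk_apply [Finite α]
    (hG : ∀ σ : Perm α, (∀ x, σ x ∈ orbit G x) → σ ∈ G)
    {σ : Perm α} {π : Perm (orbitRel.Quotient G α)}
    (hσ : ∀ x, Quotient.mk'' (σ x) = π (Quotient.mk'' x)) :
    σ ∈ normalizer (G : Set (Perm α)) := by
  refine mem_normalizer_fintype fun g hg => hG _ fun x => ?_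
  have hg_mk (y : α) : (Quotient.mk'' (g y) : orbitRel.Quotient G α) = Quotient.mk'' y :=
    orbitRel.Quotient.mk_eq_mk_iff.mpr ⟨⟨g, hg⟩, rfl⟩
  rw [← orbitRel.Quotient.mk_eq_mk_iff, Perm.mul_apply, Perm.mul_apply, hσ, hg_mk, ← hσ]
  exact congrArg _ (σ.apply_symm_apply x)

theorem mem_range_normalizerOrbitPerm_iff [Finite α]
    (hG : ∀ σ : Perm α, (∀ x, σ x ∈ orbit G x) → σ ∈ G)
    (π : Perm (orbitRel.Quotient G α)) :
    π ∈ (normalizerOrbitPerm G).range ↔ ∀ q, Nat.card (π q).orbit = Nat.card q.orbit := by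
  constructor
  · rintro ⟨σ, rfl⟩ q
    induction q using Quotient.inductionOn'
    exact card_orbit_apply_of_mem_normalizer G σ.2 _
  · intro h
    obtain ⟨σ, hσ⟩ :=
      Perm.exists_comp_eq_of_card_fiber (Quotient.mk'' : α → orbitRel.Quotient G α) π
        (by simpa only [← orbitRel.Quotient.mem_orbit] using h)
    refine ⟨⟨σ, mem_normalizer_of_mk_apply hG hσ⟩, ?_⟩
    ext q
    induction q using Quotient.inductionOn'
    exact hσ _

theorem relIndex_normalizer_eq_card [Finite α]
    (hG : ∀ σ : Perm α, (∀ x, σ x ∈ orbit G x) → σ ∈ G) :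
    G.relIndex (normalizer (G : Set (Perm α))) =
      Nat.card {π : Perm (orbitRel.Quotient G α) //
        ∀ q, Nat.card (π q).orbit = Nat.card q.orbit} := by
  rw [relIndex, ← ker_normalizerOrbitPerm hG, index_ker]
  exact Nat.card_congr (subtypeEquivRight (mem_range_normalizerOrbitPerm_iff hG))

theorem relIndex_normalizer_eq_prod_range [Finite α]
    (hG : ∀ σ : Perm α, (∀ x, σ x ∈ orbit G x) → σ ∈ G) {N : ℕ}
    (hN : Nat.card α < N) :
    G.relIndex (normalizer (G : Set (Perm α))) =
      ∏ i ∈ range N,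
        (Nat.card {q : orbitRel.Quotient G α // Nat.card q.orbit = i}).factorial :=
  (relIndex_normalizer_eq_card hG).trans <| Perm.card_forall_comp_eq_prod_range _ fun _ =>
    (Finite.card_subtype_le _).trans_lt hN

end Subgroup

theorem mem_youngSubgroup_of_apply_mem_orbit {m : ℕ} {K : Finset (Fin m)}
    {σ : Perm (Fin (m + 1))}
    (hσ : ∀ x, σ x ∈ orbit (youngSubgroup m K) x) : σ ∈ youngSubgroup m K := by
  refine (mem_closure_isSwap ?_).mpr ⟨Set.toFinite _, hσ⟩
  rintro _ ⟨i, -, rfl⟩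
  exact ⟨_, _, Fin.castSucc_lt_succ.ne, rfl⟩

/-- If the composition of `m+1` associated to the subset `K` of simple transpositions of
`S_{m+1}` has `a_i` parts equal to `i`, then the index of the Young subgroup `W_K` in its
normalizer is `a_1! ⋅ a_2! ⋅ ⋯ ⋅ a_{m+1}!`. -/
theorem young_normalizer_index (m : ℕ) (K : Finset (Fin m)) :
    (youngSubgroup m K).relIndex (Subgroup.normalizer (youngSubgroup m K : Set (Equiv.Perm (Fin (m + 1))))) =
      ∏ i ∈ Finset.range (m + 2),
        Nat.factorial ((orbitSizes m (youngSubgroup m K)).count i) := by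
  rw [Subgroup.relIndex_normalizer_eq_prod_range (fun _ => mem_youngSubgroup_of_apply_mem_orbit)
    (N := m + 2) (by simp)]
  -- the instance through which `orbitSizes` enumerates the orbits
  let _ : Fintype _ := Fintype.ofFinite (orbitRel.Quotient (youngSubgroup m K) (Fin (m + 1)))
  exact prod_congr rfl fun i _ => congrArg Nat.factorial (Multiset.count_map_univ _ i).symm
end

section
/- In Solomon's descent algebra of a finite Coxeter group, the diagonal structure constant a_{JKK} equals the number of fixed points of W_K acting on the coset space W/W_J, i.e. a_{JKK} = |{w ∈ X_J⁻¹ ∩ X_K : w⁻¹Jw ∩ K = K}| = |Fix_{W/W_J}(W_K)|. -/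
/-!
The coset `h W_J` is fixed by `W_K` iff `h⁻¹ W_K h ≤ W_J`. Choose `h` of minimal length in its
coset. Lengths are then additive on `h W_J`, so for `i ∈ K` the element `h⁻¹ s_i h ∈ W_J`
satisfies `ℓ h + ℓ (h⁻¹ s_i h) = ℓ (s_i h) ≤ ℓ h + 1`: it has length one, hence is a simple
reflection `s_j` with `j ∈ J`. The same additivity makes `h⁻¹` minimal in `h⁻¹ W_K`. So
`g ↦ g⁻¹ W_J` maps the set counted by `a_{JKK}` bijectively onto the fixed points.

Additivity of lengths comes from the exchange condition, which follows from the parity action of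
`W` on `W × ZMod 2` (Björner–Brenti): `s_i` acts by `(t, e) ↦ (s_i t s_i, e + [t = s_i])`, and a
word `ω` flips the parity of `t` once for each occurrence of `t` in its right inversion sequence.
-/

/-- The set `X_J` of minimal length representatives of the left cosets of the standard
parabolic subgroup `W_J` in a Coxeter group `W`. -/
def minCosetReps {B W : Type*} [Group W] {M : CoxeterMatrix B} (cs : CoxeterSystem M W)
    (J : Set B) : Set W :=
  {w : W | ∀ u ∈ Subgroup.closure (cs.simple '' J), cs.length w ≤ cs.length (w * u)}

theorem QuotientGroup.mk_mem_fixedPoints_iff {G : Type*} [Group G] (H L : Subgroup G) (g : G) :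
    (g : G ⧸ L) ∈ MulAction.fixedPoints H (G ⧸ L) ↔ ∀ h ∈ H, g⁻¹ * h * g ∈ L := by
  simp only [MulAction.mem_fixedPoints, Subtype.forall]
  refine forall₂_congr fun h _ => ?_
  change (h : G) • (g : G ⧸ L) = _ ↔ _
  rw [MulAction.Quotient.smul_mk, smul_eq_mul, eq_comm, QuotientGroup.eq, mul_assoc]

namespace CoxeterSystem

variable {B : Type*}

theorem alternatingWord_two_mul_succ (i j : B) (p : ℕ) :
    alternatingWord i j (2 * (p + 1)) = i :: j :: alternatingWord i j (2 * p) := by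
  rw [show 2 * (p + 1) = 2 * p + 1 + 1 by ring, alternatingWord_succ', alternatingWord_succ']
  simp [parity_simps]

theorem alternatingWord_two_mul_reverse (i j : B) (p : ℕ) :
    (alternatingWord i j (2 * p)).reverse = alternatingWord j i (2 * p) := by
  induction p with
  | zero => simp [alternatingWord]
  | succ p ih =>
    rw [alternatingWord_two_mul_succ j i, ← ih, show 2 * (p + 1) = 2 * p + 1 + 1 by ring,
      alternatingWord_succ, alternatingWord_succ]
    simp

theorem prod_map_alternatingWord_two_mul {G : Type*} [Monoid G] (f : B → G) (i j : B) (p : ℕ) :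
    ((alternatingWord i j (2 * p)).map f).prod = (f i * f j) ^ p := by
  induction p with
  | zero => simp [alternatingWord]
  | succ p ih => rw [alternatingWord_two_mul_succ, List.map_cons, List.map_cons, List.prod_cons,
      List.prod_cons, ih, pow_succ', mul_assoc]

variable {W : Type*} [Group W] {M : CoxeterMatrix B} (cs : CoxeterSystem M W)

local prefix:100 "s" => cs.simple
local prefix:100 "π" => cs.wordProd
local prefix:100 "ℓ" => cs.length

open Classical in
noncomputable def parityPerm (i : B) : Equiv.Perm (W × ZMod 2) :=
  Function.Involutive.toPerm (fun p => (s i * p.1 * s i, p.2 + if p.1 = s i then 1 else 0)) <| by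
    rintro ⟨t, e⟩
    have hconj : s i * t * s i = s i ↔ t = s i := by
      constructor
      · intro h
        simpa [mul_assoc] using congrArg (fun x => s i * x * s i) h
      · rintro rfl
        simp
    simp only [hconj, add_assoc, CharTwo.add_self_eq_zero, add_zero, Prod.mk.injEq, and_true]
    simp [mul_assoc]

theorem parityPerm_apply [DecidableEq W] (i : B) (t : W) (e : ZMod 2) :
    cs.parityPerm i (t, e) = (s i * t * s i, e + if t = s i then 1 else 0) := by
  simp only [parityPerm, Function.Involutive.toPerm, Equiv.coe_fn_mk]
  congr

theorem prod_map_parityPerm_apply [DecidableEq W] (ω : List B) (t : W) (e : ZMod 2) :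
    (ω.map cs.parityPerm).prod (t, e) =
      (π ω * t * (π ω)⁻¹, e + (cs.rightInvSeq ω).count t) := by
  induction ω generalizing e with
  | nil => simp
  | cons i ω ih =>
    have hconj : π ω * t * (π ω)⁻¹ = s i ↔ ((π ω)⁻¹ * s i * π ω == t) := by
      rw [beq_iff_eq, eq_comm (b := t), ← mul_inv_eq_iff_eq_mul, mul_assoc, eq_inv_mul_iff_mul_eq,
        ← mul_assoc]
    have hris : cs.rightInvSeq (i :: ω) = ((π ω)⁻¹ * s i * π ω) :: cs.rightInvSeq ω := rfl
    rw [List.map_cons, List.prod_cons, Equiv.Perm.mul_apply, ih, parityPerm_apply, hris,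
      List.count_cons, wordProd_cons]
    simp only [hconj, Nat.cast_add, Nat.cast_ite, Nat.cast_one, Nat.cast_zero, add_assoc,
      mul_inv_rev, cs.inv_simple, Prod.mk.injEq, and_true]
    simp [mul_assoc]

theorem even_count_rightInvSeq_alternatingWord [DecidableEq W] (i j : B) (t : W) :
    Even ((cs.rightInvSeq (alternatingWord i j (2 * M i j))).count t) := by
  let g (k : ℕ) : W := s j * (s i * s j) ^ k
  have hlis :
      cs.leftInvSeq (alternatingWord j i (2 * M i j)) = (List.range (2 * M i j)).map g := by
    refine List.ext_getElem (by simp) fun k hk _ => ?_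
    rw [getElem_leftInvSeq_alternatingWord cs j i _ k (by simpa using hk), List.getElem_map,
      List.getElem_range, prod_alternatingWord_eq_mul_pow]
    simp [g, show (2 * k + 1) / 2 = k by omega]
  have hperiodic : (List.range (2 * M i j)).map g =
      (List.range (M i j)).map g ++ (List.range (M i j)).map g := by
    rw [two_mul, List.range_add, List.map_append, List.map_map]
    congr 2
    funext k
    simp [g, pow_add, cs.simple_mul_simple_pow]
  rw [← alternatingWord_two_mul_reverse j i, rightInvSeq_reverse, List.count_reverse, hlis,
    hperiodic, List.count_append]
  exact Even.add_self _

theorem isLiftable_parityPerm : M.IsLiftable cs.parityPerm := by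
  classical
  intro i j
  refine Equiv.ext fun ⟨t, e⟩ => ?_
  have hprod : π (alternatingWord i j (2 * M i j)) = 1 := by
    rw [wordProd, prod_map_alternatingWord_two_mul, cs.simple_mul_simple_pow]
  obtain ⟨n, hn⟩ := cs.even_count_rightInvSeq_alternatingWord i j t
  rw [← prod_map_alternatingWord_two_mul, prod_map_parityPerm_apply, hprod, hn]
  simp [CharTwo.add_self_eq_zero]

noncomputable def parityRep : W →* Equiv.Perm (W × ZMod 2) :=
  cs.lift ⟨cs.parityPerm, cs.isLiftable_parityPerm⟩

theorem parityRep_simple (i : B) : cs.parityRep (s i) = cs.parityPerm i :=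
  cs.lift_apply_simple cs.isLiftable_parityPerm i

theorem parityRep_wordProd_apply [DecidableEq W] (ω : List B) (t : W) (e : ZMod 2) :
    cs.parityRep (π ω) (t, e) = (π ω * t * (π ω)⁻¹, e + (cs.rightInvSeq ω).count t) := by
  have hsimple : cs.parityRep ∘ cs.simple = cs.parityPerm := funext cs.parityRep_simple
  rw [← prod_map_parityPerm_apply, wordProd, map_list_prod, List.map_map, hsimple]

theorem exists_eraseIdx_of_length_mul_simple_lt {ω : List B} {j : B}
    (hlt : ℓ (π ω * s j) < ℓ (π ω)) :
    ∃ k < ω.length, π ω * s j = π (ω.eraseIdx k) := by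
  classical
  have hmem : s j ∈ cs.rightInvSeq ω := by
    by_contra hnot
    obtain ⟨ω', hω', heq⟩ := cs.exists_isReduced (π ω * s j)
    -- Evaluate the parity action of both sides of `heq` at `(s j, 0)`: on the left only the
    -- final `s j` flips the parity.
    have hparity := congrArg (fun w => (cs.parityRep w (s j, 0)).2) heq
    simp only [map_mul, Equiv.Perm.mul_apply, parityRep_simple, parityPerm_apply,
      parityRep_wordProd_apply, cs.simple_mul_simple_cancel_right, if_true, zero_add] at hparity
    rw [List.count_eq_zero.mpr hnot] at hparity
    have hmem' : s j ∈ cs.rightInvSeq ω' :=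
      List.count_pos_iff.mp (Nat.pos_of_ne_zero fun h => by simp [h] at hparity)
    have hlt' := (cs.isRightInversion_of_mem_rightInvSeq hω' hmem').2
    rw [← heq, cs.simple_mul_simple_cancel_right] at hlt'
    exact Nat.lt_asymm hlt hlt'
  obtain ⟨k, hk, hkj⟩ := List.mem_iff_getElem.mp hmem
  refine ⟨k, by simpa using hk, ?_⟩
  rw [← wordProd_mul_getD_rightInvSeq, List.getD_eq_getElem _ _ hk, hkj]

theorem exists_isReduced_sublist (ω : List B) :
    ∃ τ, τ.Sublist ω ∧ cs.IsReduced τ ∧ π τ = π ω := by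
  induction ω using List.reverseRecOn with
  | nil => exact ⟨[], List.Sublist.refl _, by simp [IsReduced], rfl⟩
  | append_singleton ω j ih =>
    obtain ⟨τ, hsub, hτ, hprod⟩ := ih
    rw [wordProd_append, wordProd_singleton, ← hprod]
    rcases cs.length_mul_simple (π τ) j with hup | hdown
    · refine ⟨τ ++ [j], hsub.append (List.Sublist.refl _), ?_, by simp [wordProd_append]⟩
      rw [IsReduced, wordProd_append, wordProd_singleton, hup, hτ.eq, List.length_append,
        List.length_singleton]
    · obtain ⟨k, hk, heq⟩ :=
        cs.exists_eraseIdx_of_length_mul_simple_lt (ω := τ) (j := j) (by omega)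
      refine ⟨τ.eraseIdx k, ((List.eraseIdx_sublist τ k).trans hsub).trans
        (List.sublist_append_left _ _), ?_, heq.symm⟩
      rw [IsReduced, ← heq, List.length_eraseIdx_of_lt hk, ← hτ.eq]
      omega

theorem exists_eraseIdx_append_of_length_mul_simple_lt {ρ τ : List B} {j : B}
    (hlt : ℓ (π (ρ ++ τ) * s j) < ℓ (π (ρ ++ τ))) :
    (∃ k < ρ.length, π (ρ ++ τ) * s j = π (ρ.eraseIdx k) * π τ) ∨
      ∃ k < τ.length, π τ * s j = π (τ.eraseIdx k) := by
  obtain ⟨k, hk, heq⟩ := cs.exists_eraseIdx_of_length_mul_simple_lt hlt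
  by_cases hkρ : k < ρ.length
  · rw [List.eraseIdx_append_of_lt_length hkρ, cs.wordProd_append (ρ.eraseIdx k)] at heq
    exact .inl ⟨k, hkρ, heq⟩
  · rw [List.eraseIdx_append_of_length_le (not_lt.mp hkρ), wordProd_append, wordProd_append,
      mul_assoc] at heq
    refine .inr ⟨k - ρ.length, ?_, mul_left_cancel heq⟩
    rw [List.length_append] at hk
    omega

section Parabolic

variable {J : Set B}

theorem wordProd_mem_closure {ω : List B} (hω : ∀ b ∈ ω, b ∈ J) :
    π ω ∈ Subgroup.closure (cs.simple '' J) := by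
  refine list_prod_mem fun _ hx => ?_
  obtain ⟨b, hb, rfl⟩ := List.mem_map.mp hx
  exact Subgroup.subset_closure ⟨b, hω b hb, rfl⟩

theorem exists_wordProd_eq_of_mem_closure {u : W}
    (hu : u ∈ Subgroup.closure (cs.simple '' J)) :
    ∃ ω : List B, (∀ b ∈ ω, b ∈ J) ∧ π ω = u := by
  induction hu using Subgroup.closure_induction_right with
  | one => exact ⟨[], by simp, rfl⟩
  | mul_right _ _ _ hy ih | mul_inv_cancel _ _ _ hy ih =>
    obtain ⟨ω, hω, rfl⟩ := ih
    obtain ⟨j, hj, rfl⟩ := hy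
    exact ⟨ω ++ [j], by simpa [or_imp, forall_and] using ⟨hω, hj⟩, by simp [wordProd_append]⟩

theorem exists_isReduced_of_mem_closure {u : W} (hu : u ∈ Subgroup.closure (cs.simple '' J)) :
    ∃ τ : List B, (∀ b ∈ τ, b ∈ J) ∧ cs.IsReduced τ ∧ π τ = u := by
  obtain ⟨ω, hω, rfl⟩ := cs.exists_wordProd_eq_of_mem_closure hu
  obtain ⟨τ, hsub, hτ, hprod⟩ := cs.exists_isReduced_sublist ω
  exact ⟨τ, fun b hb => hω b (hsub.subset hb), hτ, hprod⟩

theorem mem_image_simple_of_mem_closure_of_length_eq_one {u : W}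
    (hu : u ∈ Subgroup.closure (cs.simple '' J)) (hlen : ℓ u = 1) : u ∈ cs.simple '' J := by
  obtain ⟨τ, hτJ, hτ, rfl⟩ := cs.exists_isReduced_of_mem_closure hu
  obtain ⟨j, rfl⟩ := List.length_eq_one_iff.mp (hτ.eq ▸ hlen)
  exact ⟨j, hτJ j (by simp), by simp⟩

theorem length_mul_of_mem_minCosetReps {w u : W} (hw : w ∈ minCosetReps cs J)
    (hu : u ∈ Subgroup.closure (cs.simple '' J)) : ℓ (w * u) = ℓ w + ℓ u := by
  obtain ⟨τ, hτJ, hτ, rfl⟩ := cs.exists_isReduced_of_mem_closure hu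
  rw [hτ.eq]
  clear hu
  induction τ using List.reverseRecOn with
  | nil => simp
  | append_singleton τ j ih =>
    have hτ' : cs.IsReduced τ := by simpa using hτ.take τ.length
    have hτJ' : ∀ b ∈ τ, b ∈ J := fun b hb => hτJ b (by simp [hb])
    have hj : j ∈ J := hτJ j (by simp)
    have hlenτ := ih hτJ' hτ'
    rw [wordProd_append, wordProd_singleton, ← mul_assoc, List.length_append,
      List.length_singleton, ← add_assoc, ← hlenτ]
    refine (cs.length_mul_simple (w * π τ) j).resolve_right fun hdown => ?_
    obtain ⟨ρ, hρ, rfl⟩ := cs.exists_isReduced w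
    have hρτ : cs.IsReduced (ρ ++ τ) := by
      rw [IsReduced, wordProd_append, hlenτ, hρ.eq, List.length_append]
    rw [← wordProd_append] at hdown
    rcases cs.exists_eraseIdx_append_of_length_mul_simple_lt (ρ := ρ) (τ := τ) (j := j)
      (by omega) with ⟨k, hk, heq⟩ | ⟨k, hk, heq⟩
    · -- `π ρ` times an element of `W_J` would be shorter than `π ρ`.
      have hmem : π τ * s j * (π τ)⁻¹ ∈ Subgroup.closure (cs.simple '' J) :=
        mul_mem (mul_mem (cs.wordProd_mem_closure hτJ') (Subgroup.subset_closure ⟨j, hj, rfl⟩))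
          (inv_mem (cs.wordProd_mem_closure hτJ'))
      rw [wordProd_append] at heq
      have hshorter : π ρ * (π τ * s j * (π τ)⁻¹) = π (ρ.eraseIdx k) := by
        rw [eq_mul_inv_of_mul_eq heq.symm]
        group
      have hmin := hw _ hmem
      have hle := cs.length_wordProd_le (ρ.eraseIdx k)
      rw [hshorter] at hmin
      rw [List.length_eraseIdx_of_lt hk] at hle
      have hρlen := hρ.eq
      omega
    · have hle := cs.length_wordProd_le (τ.eraseIdx k)
      rw [← heq, List.length_eraseIdx_of_lt hk, ← wordProd_singleton, ← wordProd_append, hτ.eq,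
        List.length_append, List.length_singleton] at hle
      omega

theorem eq_of_mem_minCosetReps {w w' : W} (hw : w ∈ minCosetReps cs J)
    (hw' : w' ∈ minCosetReps cs J) (h : w⁻¹ * w' ∈ Subgroup.closure (cs.simple '' J)) :
    w = w' := by
  have hadd := cs.length_mul_of_mem_minCosetReps hw h
  have hle := hw' _ (inv_mem h)
  rw [mul_inv_cancel_left] at hadd
  rw [mul_inv_rev, inv_inv, mul_inv_cancel_left] at hle
  exact inv_mul_eq_one.mp (cs.length_eq_zero_iff.mp (by omega))

theorem exists_mul_mem_minCosetReps (x : W) :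
    ∃ u ∈ Subgroup.closure (cs.simple '' J), x * u ∈ minCosetReps cs J := by
  obtain ⟨u, hu, hmin⟩ := (measure fun u => ℓ (x * u)).wf.has_min
    (Subgroup.closure (cs.simple '' J) : Set W) ⟨1, one_mem _⟩
  refine ⟨u, hu, fun v hv => ?_⟩
  rw [mul_assoc]
  exact not_lt.mp (hmin (u * v) (mul_mem hu hv))

variable (J) in
noncomputable def minCosetRepsEquiv :
    minCosetReps cs J ≃ W ⧸ Subgroup.closure (cs.simple '' J) :=
  Equiv.ofBijective (fun w => (w : W ⧸ _))
    ⟨fun w w' h => Subtype.ext (cs.eq_of_mem_minCosetReps w.2 w'.2 (QuotientGroup.eq.mp h)),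
      fun q => by
        obtain ⟨x, rfl⟩ := QuotientGroup.mk_surjective q
        obtain ⟨u, hu, hxu⟩ := cs.exists_mul_mem_minCosetReps (J := J) x
        exact ⟨⟨x * u, hxu⟩, QuotientGroup.eq.mpr (by simpa using inv_mem hu)⟩⟩

theorem card_minCosetReps_mk_mem (F : Set (W ⧸ Subgroup.closure (cs.simple '' J))) :
    Nat.card {w // w ∈ minCosetReps cs J ∧ (w : W ⧸ _) ∈ F} = Nat.card F :=
  Nat.card_congr <| (Equiv.subtypeSubtypeEquivSubtypeInter _ _).symm.trans
    ((cs.minCosetRepsEquiv J).subtypeEquiv fun _ => Iff.rfl)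

end Parabolic

section FixedPoints

variable {J K : Set B} {h : W}

theorem conj_mem_closure_iff_of_mem_minCosetReps (hh : h ∈ minCosetReps cs J) :
    (∀ q ∈ Subgroup.closure (cs.simple '' K), h⁻¹ * q * h ∈ Subgroup.closure (cs.simple '' J)) ↔
      ∀ i ∈ K, h⁻¹ * s i * h ∈ cs.simple '' J := by
  constructor
  · intro hconj i hi
    have hv := hconj (s i) (Subgroup.subset_closure ⟨i, hi, rfl⟩)
    have hadd := cs.length_mul_of_mem_minCosetReps hh hv
    rw [show h * (h⁻¹ * s i * h) = s i * h by group] at hadd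
    refine cs.mem_image_simple_of_mem_closure_of_length_eq_one hv ?_
    rcases cs.length_simple_mul h i with hup | hdown <;> omega
  · intro hsimple
    have hle : Subgroup.closure (cs.simple '' K) ≤
        (Subgroup.closure (cs.simple '' J)).comap (MulAut.conj h⁻¹).toMonoidHom := by
      rw [Subgroup.closure_le]
      rintro _ ⟨i, hi, rfl⟩
      simpa using Subgroup.subset_closure (hsimple i hi)
    intro q hq
    simpa using hle hq

theorem inv_mem_minCosetReps_of_conj_mem_closure (hh : h ∈ minCosetReps cs J)
    (hconj : ∀ q ∈ Subgroup.closure (cs.simple '' K),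
      h⁻¹ * q * h ∈ Subgroup.closure (cs.simple '' J)) :
    h⁻¹ ∈ minCosetReps cs K := by
  intro u hu
  have hadd := cs.length_mul_of_mem_minCosetReps hh (hconj u⁻¹ (inv_mem hu))
  rw [← cs.length_inv (h⁻¹ * u), mul_inv_rev, inv_inv, cs.length_inv]
  calc ℓ h ≤ ℓ h + ℓ (h⁻¹ * u⁻¹ * h) := Nat.le_add_right _ _
    _ = ℓ (u⁻¹ * h) := by rw [← hadd]; group

theorem mk_mem_fixedPoints_iff_of_mem_minCosetReps (hh : h ∈ minCosetReps cs J) :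
    (h : W ⧸ Subgroup.closure (cs.simple '' J)) ∈ MulAction.fixedPoints
        (Subgroup.closure (cs.simple '' K)) (W ⧸ Subgroup.closure (cs.simple '' J)) ↔
      h⁻¹ ∈ minCosetReps cs K ∧ ∀ i ∈ K, h⁻¹ * s i * h ∈ cs.simple '' J := by
  rw [QuotientGroup.mk_mem_fixedPoints_iff, ← cs.conj_mem_closure_iff_of_mem_minCosetReps hh]
  exact ⟨fun hconj => ⟨cs.inv_mem_minCosetReps_of_conj_mem_closure hh hconj, hconj⟩, And.right⟩

end FixedPoints

end CoxeterSystem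

theorem descent_diagonal_structure_constant_eq_card_fixedPoints_general
    {B W : Type*} [Group W] (M : CoxeterMatrix B) (cs : CoxeterSystem M W)
    (J K : Set B) :
    Nat.card {g : W // g⁻¹ ∈ minCosetReps cs J ∧ g ∈ minCosetReps cs K ∧
        ((fun x => g⁻¹ * x * g) '' (cs.simple '' J)) ∩ (cs.simple '' K) = cs.simple '' K} =
      Nat.card (MulAction.fixedPoints (↥(Subgroup.closure (cs.simple '' K)))
        (W ⧸ Subgroup.closure (cs.simple '' J))) := by
  have himage : ∀ g : W, (fun x => g⁻¹ * x * g) '' (cs.simple '' J) ∩ cs.simple '' K =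
      cs.simple '' K ↔ ∀ i ∈ K, g * cs.simple i * g⁻¹ ∈ cs.simple '' J := by
    intro g
    rw [Set.inter_eq_right, Set.image_subset_iff]
    refine forall₂_congr fun i _ => ⟨fun ⟨x, hx, hxi⟩ => ?_, fun h => ⟨_, h, by group⟩⟩
    simpa [← hxi, mul_assoc] using hx
  rw [← cs.card_minCosetReps_mk_mem]
  refine Nat.card_congr <| (Equiv.inv W).subtypeEquiv fun g => and_congr_right fun hJ => ?_
  rw [Equiv.inv_apply, cs.mk_mem_fixedPoints_iff_of_mem_minCosetReps hJ, inv_inv, himage]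

/-- The diagonal structure constant `a_{JKK}` of Solomon's descent algebra, i.e. the number
of `w ∈ X_J⁻¹ ∩ X_K` with `w⁻¹Jw ∩ K = K`, equals the number of fixed points of `W_K`
acting on the coset space `W ⧸ W_J`. -/
theorem descent_diagonal_structure_constant_eq_card_fixedPoints
    {B W : Type*} [Group W] (M : CoxeterMatrix B) (cs : CoxeterSystem M W) [Finite W]
    (J K : Set B) :
    Nat.card {g : W // g⁻¹ ∈ minCosetReps cs J ∧ g ∈ minCosetReps cs K ∧
        ((fun x => g⁻¹ * x * g) '' (cs.simple '' J)) ∩ (cs.simple '' K) = cs.simple '' K} =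
      Nat.card (MulAction.fixedPoints (↥(Subgroup.closure (cs.simple '' K)))
        (W ⧸ Subgroup.closure (cs.simple '' J))) :=
  descent_diagonal_structure_constant_eq_card_fixedPoints_general M cs J K
end

section
/- Consider the action of S_n (n > 2) on unordered complementary pairs {P, I∖P} of subsets of I = {1,…,n} induced by the natural action on I. For a permutation c that cyclically permutes a subset J ⊆ I with |J| ≥ 2 and fixes the rest, a pair {P, Q} is fixed by c if and only if J ⊆ P or J ⊆ Q; consequently the number of fixed pairs of c is even when J ≠ I. -/
/-!
A permutation with a fixed point `a` cannot map `P` onto `Pᶜ` (it would have to move `a` across),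
so it fixes the pair `{P, Pᶜ}` exactly when it fixes `P`. A cycle carries any point of its support
to any other, so a set it fixes either contains the support `J` or misses it. Hence the fixed pairs
correspond to the supersets of `J`, and there are `2 ^ |Jᶜ|` of them, which is even as `J ≠ I`.
-/

open Pointwise

section MulAction

variable {G α : Type*} [Group G] [MulAction G α]

theorem Set.smul_pair_compl (g : G) (P : Set α) :
    g • ({P, Pᶜ} : Set (Set α)) = {g • P, (g • P)ᶜ} := by
  rw [Set.smul_set_insert, Set.smul_set_singleton, Set.smul_set_compl]

theorem smul_set_ne_compl_of_smul_eq {g : G} {a : α} (ha : g • a = a) (P : Set α) :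
    g • P ≠ Pᶜ := fun h => by
  have : a ∈ g • P ↔ a ∈ P := by
    rw [← ha, Set.smul_mem_smul_set_iff, ha]
  rw [h] at this
  exact not_iff_self this

theorem smul_pair_compl_eq_self_iff {g : G} {a : α} (ha : g • a = a) (P : Set α) :
    g • ({P, Pᶜ} : Set (Set α)) = {P, Pᶜ} ↔ g • P = P := by
  rw [Set.smul_pair_compl, Set.pair_eq_pair_iff]
  refine ⟨?_, fun h => .inl ⟨h, by rw [h]⟩⟩
  rintro (⟨h, -⟩ | ⟨h, -⟩)
  · exact h
  · exact (smul_set_ne_compl_of_smul_eq ha P h).elim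

end MulAction

namespace Equiv.Perm

variable {α : Type*} [Fintype α] [DecidableEq α] {σ : Perm α} {P : Set α}

theorem smul_set_eq_self_of_support_subset (h : (σ.support : Set α) ⊆ P) : σ • P = P :=
  MulAction.set_mem_fixedBy_of_movedBy_subset fun x hx => h (by simpa using hx)

theorem smul_set_eq_self_of_support_subset_compl (h : (σ.support : Set α) ⊆ Pᶜ) : σ • P = P := by
  rw [← compl_inj_iff, ← Set.smul_set_compl]
  exact smul_set_eq_self_of_support_subset h

theorem IsCycle.support_subset_of_smul_set_eq_self (hσ : σ.IsCycle) (hP : σ • P = P) {x : α}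
    (hx : x ∈ σ.support) (hxP : x ∈ P) : (σ.support : Set α) ⊆ P := by
  intro y hy
  obtain ⟨k, rfl⟩ := hσ.sameCycle (mem_support.mp hx) (mem_support.mp hy)
  have hPk : (σ ^ k) • P = P := MulAction.mem_fixedBy_zpow (g := σ) hP k
  rw [← hPk]
  exact Set.smul_mem_smul_set hxP

theorem IsCycle.smul_set_eq_self_iff (hσ : σ.IsCycle) :
    σ • P = P ↔ (σ.support : Set α) ⊆ P ∨ (σ.support : Set α) ⊆ Pᶜ := by
  refine ⟨fun hP => ?_, fun h => h.elim smul_set_eq_self_of_support_subset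
    smul_set_eq_self_of_support_subset_compl⟩
  by_cases hmeet : ∃ x ∈ σ.support, x ∈ P
  · obtain ⟨x, hx, hxP⟩ := hmeet
    exact .inl (hσ.support_subset_of_smul_set_eq_self hP hx hxP)
  · exact .inr fun x hx hxP => hmeet ⟨x, hx, hxP⟩

theorem exists_apply_eq_self_of_card_support_lt (h : σ.support.card < Fintype.card α) :
    ∃ a, σ a = a := by
  obtain ⟨a, -, ha⟩ := Finset.exists_mem_notMem_of_card_lt_card h
  exact ⟨a, notMem_support.mp ha⟩

end Equiv.Perm

namespace Set

variable {α : Type*}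

theorem nat_card_supersets [Finite α] (J : Set α) :
    Nat.card {P : Set α // J ⊆ P} = 2 ^ Nat.card ↥Jᶜ := by
  have : Fintype ↥Jᶜ := Fintype.ofFinite _
  have e : {P : Set α // J ⊆ P} ≃ Set ↥Jᶜ :=
    (compl_involutive.toPerm _).subtypeEquiv (fun _ => compl_subset_compl.symm) |>.trans
      (Equiv.Set.powerset Jᶜ)
  rw [Nat.card_congr e, Nat.card_eq_fintype_card, Fintype.card_set, Nat.card_eq_fintype_card]

theorem nat_card_pairs_compl_eq_supersets {J : Set α} (hJ : J.Nonempty) {p : Set (Set α) → Prop}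
    (hp : ∀ P, p {P, Pᶜ} ↔ J ⊆ P ∨ J ⊆ Pᶜ) :
    Nat.card {pq : Set (Set α) // (∃ P : Set α, pq = {P, Pᶜ}) ∧ p pq} =
      Nat.card {P : Set α // J ⊆ P} := by
  refine (Nat.card_congr (Equiv.ofBijective
    (fun P => ⟨{P.1, P.1ᶜ}, ⟨P.1, rfl⟩, (hp P.1).2 (.inl P.2)⟩) ⟨?_, ?_⟩)).symm
  · rintro ⟨P, hP⟩ ⟨Q, hQ⟩ hPQ
    obtain ⟨x, hx⟩ := hJ
    rcases Set.pair_eq_pair_iff.mp (congrArg Subtype.val hPQ) with ⟨h, -⟩ | ⟨h, -⟩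
    · exact Subtype.ext h
    · exact absurd (hQ hx) (by rw [← Set.mem_compl_iff, ← show P = Qᶜ from h]; exact hP hx)
  · rintro ⟨_, ⟨P, rfl⟩, hpP⟩
    rcases (hp P).1 hpP with hP | hP
    · exact ⟨⟨P, hP⟩, rfl⟩
    · exact ⟨⟨Pᶜ, hP⟩, Subtype.ext (by simp [Set.pair_comm])⟩

end Set

theorem cycle_fixed_complementary_pairs_general
    (n : ℕ) (c : Equiv.Perm (Fin n)) (hc : c.IsCycle)
    (hJ : c.support.card < n) :
    (∀ P : Set (Fin n),
      c • ({P, Pᶜ} : Set (Set (Fin n))) = {P, Pᶜ} ↔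
        ((c.support : Set (Fin n)) ⊆ P ∨ (c.support : Set (Fin n)) ⊆ Pᶜ)) ∧
    Even (Nat.card {pq : Set (Set (Fin n)) //
      (∃ P : Set (Fin n), pq = {P, Pᶜ}) ∧ c • pq = pq}) := by
  obtain ⟨a, ha⟩ := c.exists_apply_eq_self_of_card_support_lt (by simpa using hJ)
  have hfix (P : Set (Fin n)) := (smul_pair_compl_eq_self_iff (g := c) ha P).trans
    hc.smul_set_eq_self_iff
  refine ⟨hfix, ?_⟩
  have : Nonempty ↥(c.support : Set (Fin n))ᶜ := ⟨⟨a, by simpa using ha⟩⟩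
  rw [Set.nat_card_pairs_compl_eq_supersets (by simpa using hc.nonempty_support) hfix, Set.nat_card_supersets]
  exact Nat.even_pow.mpr ⟨even_two, Nat.card_pos.ne'⟩

/-- Let `S_n` (`n > 2`) act on unordered complementary pairs `{P, I ∖ P}` of subsets of
`I = {1, …, n}` by applying a permutation to both members. For a cycle `c` with support
`J`, `2 ≤ |J| < n`, a pair `{P, Pᶜ}` is fixed by `c` if and only if `J ⊆ P` or `J ⊆ Pᶜ`;
consequently the number of fixed pairs of `c` is even. -/
theorem cycle_fixed_complementary_pairs
    (n : ℕ) (hn : 2 < n) (c : Equiv.Perm (Fin n)) (hc : c.IsCycle)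
    (hJ : c.support.card < n) :
    (∀ P : Set (Fin n),
      c • ({P, Pᶜ} : Set (Set (Fin n))) = {P, Pᶜ} ↔
        ((c.support : Set (Fin n)) ⊆ P ∨ (c.support : Set (Fin n)) ⊆ Pᶜ)) ∧
    Even (Nat.card {pq : Set (Set (Fin n)) //
      (∃ P : Set (Fin n), pq = {P, Pᶜ}) ∧ c • pq = pq}) :=
  cycle_fixed_complementary_pairs_general n c hc hJ
end

section
/- Let M be an n×n lower triangular integer matrix with nonzero diagonal entries, and suppose that for every row i whose diagonal entry is divisible by a prime p, every entry of row i is divisible by p. Then the rank of M modulo p equals the number of rows whose diagonal entry is not divisible by p. -/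
/-!
Modulo `p` the matrix stays lower triangular, and every row whose diagonal entry vanishes is zero.
The nonzero rows therefore span the row space, bounding the rank from above, while the principal
submatrix on the rows with nonzero diagonal entry is triangular with unit determinant, bounding it
from below.
-/

open Matrix Finset

namespace Matrix

variable {m n K : Type*} [Fintype m] [Fintype n] [DecidableEq m] [Field K]

theorem rank_le_card_of_row_eq_zero_of_notMem (A : Matrix m n K) (s : Finset m)
    (hs : ∀ i ∉ s, A i = 0) : A.rank ≤ #s := by
  classical
  let D : Matrix m m K := diagonal fun i => if i ∈ s then 1 else 0
  have hDA : D * A = A := by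
    ext i j
    by_cases hi : i ∈ s
    · simp [D, hi]
    · simp [D, hi, hs i hi]
  calc A.rank = (D * A).rank := by rw [hDA]
    _ ≤ D.rank := rank_mul_le_left _ _
    _ = #s := by simp [D, rank_diagonal, Fintype.card_subtype]

theorem IsLowerTriangular.card_diag_ne_zero_le_rank [LinearOrder m] [DecidableEq K]
    {A : Matrix m m K} (hA : A.IsLowerTriangular) : #{i | A i i ≠ 0} ≤ A.rank := by
  let B : Matrix {i // A i i ≠ 0} {i // A i i ≠ 0} K := A.submatrix (↑) (↑)
  have hB : B.IsLowerTriangular := fun _ _ h => hA h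
  have hdet : IsUnit B.det := by
    rw [det_of_isLowerTriangular B hB, isUnit_iff_ne_zero, prod_ne_zero_iff]
    exact fun i _ => i.2
  calc #{i | A i i ≠ 0} = B.rank := by
        rw [rank_of_isUnit B ((isUnit_iff_isUnit_det B).mpr hdet), Fintype.card_subtype]
    _ ≤ A.rank := rank_submatrix_le A _ _

theorem IsLowerTriangular.rank_eq_card_diag_ne_zero [LinearOrder m] [DecidableEq K]
    {A : Matrix m m K} (hA : A.IsLowerTriangular) (hzero : ∀ i, A i i = 0 → A i = 0) :
    A.rank = #{i | A i i ≠ 0} := by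
  refine le_antisymm (A.rank_le_card_of_row_eq_zero_of_notMem _ fun i hi => hzero i ?_)
    hA.card_diag_ne_zero_le_rank
  simpa using hi

end Matrix

theorem triangular_matrix_p_rank_general
    (n p : ℕ) [Fact p.Prime] (M : Matrix (Fin n) (Fin n) ℤ)
    (htri : ∀ i j : Fin n, i < j → M i j = 0)
    (hdiv : ∀ i j : Fin n, (p : ℤ) ∣ M i i → (p : ℤ) ∣ M i j) :
    (M.map (Int.cast : ℤ → ZMod p)).rank =
      (Finset.univ.filter fun i : Fin n => ¬ (p : ℤ) ∣ M i i).card := by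
  set A := M.map (Int.cast : ℤ → ZMod p)
  have hA_eq_zero (i j : Fin n) : A i j = 0 ↔ (p : ℤ) ∣ M i j :=
    ZMod.intCast_zmod_eq_zero_iff_dvd _ _
  have hA : A.IsLowerTriangular := fun i j hij =>
    (hA_eq_zero i j).mpr (htri i j hij ▸ dvd_zero _)
  have hzero (i : Fin n) (hi : A i i = 0) : A i = 0 :=
    funext fun j => (hA_eq_zero i j).mpr (hdiv i j ((hA_eq_zero i i).mp hi))
  rw [hA.rank_eq_card_diag_ne_zero hzero]
  exact congrArg card (filter_congr fun i _ => not_congr (hA_eq_zero i i))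

/-- Let `M` be an `n × n` lower triangular integer matrix with nonzero diagonal entries
such that whenever a prime `p` divides a diagonal entry `M i i`, it divides every entry of
row `i`. Then the rank of `M` modulo `p` equals the number of rows whose diagonal entry is
not divisible by `p`. -/
theorem triangular_matrix_p_rank
    (n p : ℕ) [Fact p.Prime] (M : Matrix (Fin n) (Fin n) ℤ)
    (htri : ∀ i j : Fin n, i < j → M i j = 0)
    (hdiag : ∀ i : Fin n, M i i ≠ 0)
    (hdiv : ∀ i j : Fin n, (p : ℤ) ∣ M i i → (p : ℤ) ∣ M i j) :
    (M.map (Int.cast : ℤ → ZMod p)).rank =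
      (Finset.univ.filter fun i : Fin n => ¬ (p : ℤ) ∣ M i i).card :=
  triangular_matrix_p_rank_general n p M htri hdiv
end
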